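/- Suppose K : (0,1] → (0,∞) is increasing and satisfies the doubling property K(2t) ≤ C K(t) for t ∈ (0,1/2]. Then for any fixed z ∈ D, the integral of K(1−|σ_a(w)|²)/((1−|w|²)^s |1−w̄z|^r) over the pseudo-hyperbolic disk E(z,1/2) is bounded below by a constant (depending only on C, s, r) times K(1−|σ_a(z)|²)/(1−|z|²)^{s+r−2}, uniformly in a ∈ D. -/

import Mathlib

/-!
On `E(z, 1/2)` the quantities `1 - |w|²` and `|1 - w̄z|` are comparable to `1 - |z|²`, and
`1 - |σ_a(w)|² ≥ (1 - |σ_a(z)|²) / 48`; the latter comes from the identity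
`1 - |σ_a(w)|² = (1 - |a|²)(1 - |w|²) / |1 - āw|²` together with `|1 - āw| ≤ 3 |1 - āz|`.
Six applications of doubling therefore bound the integrand below by a constant times
`K(1 - |σ_a(z)|²) / (1 - |z|²)^(s + r)`, and `E(z, 1/2)` contains the Euclidean disk of radius
`(1 - |z|²) / 4`, whose area supplies the remaining factor `(1 - |z|²)²`.
-/

open MeasureTheory ComplexConjugate

noncomputable section

/-- The disk automorphism `σ_a` of the paper, `mobius a w = σ_a(w)`. -/
def mobius (a w : ℂ) : ℂ := (a - w) / (1 - conj a * w)

/-- `pseudoHyperbolicDisk z ρ` is the paper's `E(z, ρ)`. -/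
def pseudoHyperbolicDisk (z : ℂ) (ρ : ℝ) : Set ℂ := {w | ‖w‖ < 1 ∧ ‖mobius z w‖ < ρ}

end

section Mobius

variable {a w z : ℂ}

lemma norm_one_sub_conj_mul_sq_sub_norm_sub_sq (a w : ℂ) :
    ‖1 - conj a * w‖ ^ 2 - ‖a - w‖ ^ 2 = (1 - ‖a‖ ^ 2) * (1 - ‖w‖ ^ 2) := by
  simp only [Complex.sq_norm, Complex.normSq_apply, Complex.sub_re, Complex.sub_im,
    Complex.mul_re, Complex.mul_im, Complex.one_re, Complex.one_im, Complex.conj_re,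
    Complex.conj_im]
  ring

lemma one_sub_conj_mul_ne_zero (ha : ‖a‖ ≤ 1) (hw : ‖w‖ < 1) : 1 - conj a * w ≠ 0 := by
  rw [sub_ne_zero]
  intro h
  have : ‖conj a * w‖ < 1 := by
    rw [norm_mul, Complex.norm_conj]
    exact mul_lt_one_of_nonneg_of_lt_one_right ha (norm_nonneg w) hw
  rw [← h, norm_one] at this
  exact lt_irrefl _ this

lemma one_sub_norm_sq_mobius (h : 1 - conj a * w ≠ 0) :
    1 - ‖mobius a w‖ ^ 2 = (1 - ‖a‖ ^ 2) * (1 - ‖w‖ ^ 2) / ‖1 - conj a * w‖ ^ 2 := by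
  have hd : ‖1 - conj a * w‖ ^ 2 ≠ 0 := by positivity
  rw [mobius, norm_div, div_pow, eq_div_iff hd, sub_mul, div_mul_cancel₀ _ hd, one_mul,
    norm_one_sub_conj_mul_sq_sub_norm_sub_sq]

lemma one_sub_norm_sq_mobius_pos (ha : ‖a‖ < 1) (hw : ‖w‖ < 1) :
    0 < 1 - ‖mobius a w‖ ^ 2 := by
  have hd := one_sub_conj_mul_ne_zero ha.le hw
  have hA : 0 < 1 - ‖a‖ ^ 2 := by nlinarith [norm_nonneg a]
  have hW : 0 < 1 - ‖w‖ ^ 2 := by nlinarith [norm_nonneg w]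
  rw [one_sub_norm_sq_mobius hd]
  positivity

lemma norm_one_sub_conj_mul_comm (a w : ℂ) : ‖1 - conj a * w‖ = ‖1 - conj w * a‖ := by
  rw [← Complex.norm_conj]
  simp [mul_comm]

lemma norm_one_sub_conj_mul_self (hz : ‖z‖ ≤ 1) : ‖1 - conj z * z‖ = 1 - ‖z‖ ^ 2 := by
  have hY : 0 ≤ 1 - ‖z‖ ^ 2 := by nlinarith [norm_nonneg z]
  rw [Complex.conj_mul', ← Complex.ofReal_pow, ← Complex.ofReal_one, ← Complex.ofReal_sub,
    Complex.norm_real, Real.norm_of_nonneg hY]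

lemma norm_one_sub_conj_mul_le (ha : ‖a‖ ≤ 1) (z w : ℂ) :
    ‖1 - conj a * w‖ ≤ ‖1 - conj a * z‖ + ‖z - w‖ := by
  calc ‖1 - conj a * w‖ = ‖(1 - conj a * z) + conj a * (z - w)‖ := by ring_nf
    _ ≤ ‖1 - conj a * z‖ + ‖conj a * (z - w)‖ := norm_add_le _ _
    _ ≤ ‖1 - conj a * z‖ + ‖z - w‖ := by
      rw [norm_mul, Complex.norm_conj]
      gcongr
      exact mul_le_of_le_one_left (norm_nonneg _) ha

lemma one_sub_norm_sq_div_two_le_norm_one_sub_conj_mul (hw : ‖w‖ ≤ 1) :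
    (1 - ‖a‖ ^ 2) / 2 ≤ ‖1 - conj a * w‖ := by
  have h := norm_sub_norm_le (1 : ℂ) (conj a * w)
  rw [norm_one, norm_mul, Complex.norm_conj] at h
  nlinarith [norm_nonneg a, sq_nonneg (1 - ‖a‖)]

end Mobius

section PseudoHyperbolicDisk

variable {a w z : ℂ}

lemma measurableSet_pseudoHyperbolicDisk (z : ℂ) (ρ : ℝ) :
    MeasurableSet (pseudoHyperbolicDisk z ρ) := by
  unfold pseudoHyperbolicDisk mobius
  exact (measurableSet_lt (by fun_prop : Measurable fun w : ℂ => ‖w‖) measurable_const).inter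
    (measurableSet_lt (by fun_prop : Measurable fun w => ‖(z - w) / (1 - conj z * w)‖)
      measurable_const)

lemma volume_pseudoHyperbolicDisk_ne_top (z : ℂ) (ρ : ℝ) :
    volume (pseudoHyperbolicDisk z ρ) ≠ ⊤ := by
  refine ne_top_of_le_ne_top ?_ (measure_mono fun w hw => mem_ball_zero_iff.2 hw.1)
  rw [Complex.volume_ball]
  exact ENNReal.mul_ne_top (by simp) ENNReal.coe_ne_top

lemma norm_sub_le_of_mem_pseudoHyperbolicDisk (hz : ‖z‖ < 1)
    (hw : w ∈ pseudoHyperbolicDisk z (1 / 2)) : ‖z - w‖ ≤ ‖1 - conj z * w‖ / 2 := by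
  have hd : 0 < ‖1 - conj z * w‖ := norm_pos_iff.2 (one_sub_conj_mul_ne_zero hz.le hw.1)
  have h := hw.2
  rw [mobius, norm_div, div_lt_iff₀ hd] at h
  linarith

lemma norm_one_sub_conj_mul_le_of_mem_pseudoHyperbolicDisk (hz : ‖z‖ < 1)
    (hw : w ∈ pseudoHyperbolicDisk z (1 / 2)) : ‖1 - conj z * w‖ ≤ 2 * (1 - ‖z‖ ^ 2) := by
  have h := norm_one_sub_conj_mul_le hz.le z w
  rw [norm_one_sub_conj_mul_self hz.le] at h
  linarith [norm_sub_le_of_mem_pseudoHyperbolicDisk hz hw]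

lemma one_sub_norm_sq_mem_Icc_of_mem_pseudoHyperbolicDisk (hz : ‖z‖ < 1)
    (hw : w ∈ pseudoHyperbolicDisk z (1 / 2)) :
    1 - ‖w‖ ^ 2 ∈ Set.Icc (3 / 16 * (1 - ‖z‖ ^ 2)) (4 * (1 - ‖z‖ ^ 2)) := by
  have hY : 0 < 1 - ‖z‖ ^ 2 := by nlinarith [norm_nonneg z]
  have hd := one_sub_conj_mul_ne_zero hz.le hw.1
  have hD : 0 < ‖1 - conj z * w‖ := norm_pos_iff.2 hd
  have hDlow := one_sub_norm_sq_div_two_le_norm_one_sub_conj_mul (a := z) hw.1.le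
  have hDup := norm_one_sub_conj_mul_le_of_mem_pseudoHyperbolicDisk hz hw
  -- `1 - |σ_z(w)|² ∈ (3/4, 1]` pins `(1 - |z|²)(1 - |w|²)` between `3/4 ‖1 - z̄w‖²` and `‖1 - z̄w‖²`
  have hid := one_sub_norm_sq_mobius hd
  rw [eq_div_iff (by positivity)] at hid
  have hσ : ‖mobius z w‖ ^ 2 < 1 / 4 := by nlinarith [hw.2, norm_nonneg (mobius z w)]
  constructor
  · nlinarith [sq_nonneg (‖mobius z w‖), mul_le_mul hDlow hDlow (by positivity) hD.le]
  · nlinarith [sq_nonneg (‖mobius z w‖), mul_le_mul hDup hDup hD.le (by positivity)]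

lemma norm_one_sub_conj_mul_mem_Icc_of_mem_pseudoHyperbolicDisk (hz : ‖z‖ < 1)
    (hw : w ∈ pseudoHyperbolicDisk z (1 / 2)) :
    ‖1 - conj w * z‖ ∈ Set.Icc ((1 - ‖z‖ ^ 2) / 2) (2 * (1 - ‖z‖ ^ 2)) := by
  rw [← norm_one_sub_conj_mul_comm]
  exact ⟨one_sub_norm_sq_div_two_le_norm_one_sub_conj_mul hw.1.le,
    norm_one_sub_conj_mul_le_of_mem_pseudoHyperbolicDisk hz hw⟩

lemma one_sub_norm_sq_mobius_le_of_mem_pseudoHyperbolicDisk (ha : ‖a‖ < 1) (hz : ‖z‖ < 1)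
    (hw : w ∈ pseudoHyperbolicDisk z (1 / 2)) :
    (1 - ‖mobius a z‖ ^ 2) / 48 ≤ 1 - ‖mobius a w‖ ^ 2 := by
  have hA : 0 < 1 - ‖a‖ ^ 2 := by nlinarith [norm_nonneg a]
  have hdz := one_sub_conj_mul_ne_zero ha.le hz
  have hdw := one_sub_conj_mul_ne_zero ha.le hw.1
  have hP : 0 < ‖1 - conj a * z‖ := norm_pos_iff.2 hdz
  have hQ : 0 < ‖1 - conj a * w‖ := norm_pos_iff.2 hdw
  have hQP : ‖1 - conj a * w‖ ≤ 3 * ‖1 - conj a * z‖ := by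
    have := norm_one_sub_conj_mul_le ha.le z w
    have := norm_sub_le_of_mem_pseudoHyperbolicDisk hz hw
    have := norm_one_sub_conj_mul_le_of_mem_pseudoHyperbolicDisk hz hw
    have := one_sub_norm_sq_div_two_le_norm_one_sub_conj_mul (a := z) ha.le
    rw [norm_one_sub_conj_mul_comm] at this
    linarith
  have hW := (one_sub_norm_sq_mem_Icc_of_mem_pseudoHyperbolicDisk hz hw).1
  have hW0 : 0 ≤ 1 - ‖w‖ ^ 2 := by nlinarith [norm_nonneg w, hw.1]
  rw [one_sub_norm_sq_mobius hdz, one_sub_norm_sq_mobius hdw]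
  calc (1 - ‖a‖ ^ 2) * (1 - ‖z‖ ^ 2) / ‖1 - conj a * z‖ ^ 2 / 48
      = (1 - ‖a‖ ^ 2) * (3 / 16 * (1 - ‖z‖ ^ 2)) / (3 * ‖1 - conj a * z‖) ^ 2 := by
        field_simp; ring
    _ ≤ (1 - ‖a‖ ^ 2) * (1 - ‖w‖ ^ 2) / ‖1 - conj a * w‖ ^ 2 := by gcongr

lemma ball_subset_pseudoHyperbolicDisk (hz : ‖z‖ < 1) :
    Metric.ball z ((1 - ‖z‖ ^ 2) / 4) ⊆ pseudoHyperbolicDisk z (1 / 2) := by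
  intro w hw
  rw [Metric.mem_ball, dist_comm, dist_eq_norm] at hw
  have hw1 : ‖w‖ < 1 := by
    have := norm_le_norm_add_norm_sub' w z
    rw [norm_sub_rev] at this
    nlinarith [norm_nonneg z]
  refine ⟨hw1, ?_⟩
  have hD := norm_one_sub_conj_mul_le hz.le w z
  rw [norm_one_sub_conj_mul_self hz.le, norm_sub_rev w z] at hD
  rw [mobius, norm_div, div_lt_iff₀ (norm_pos_iff.2 (one_sub_conj_mul_ne_zero hz.le hw1))]
  nlinarith [norm_nonneg z]

lemma le_volume_real_pseudoHyperbolicDisk (hz : ‖z‖ < 1) :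
    Real.pi / 16 * (1 - ‖z‖ ^ 2) ^ 2 ≤ volume.real (pseudoHyperbolicDisk z (1 / 2)) := by
  have hY : 0 ≤ 1 - ‖z‖ ^ 2 := by nlinarith [norm_nonneg z]
  calc Real.pi / 16 * (1 - ‖z‖ ^ 2) ^ 2 = volume.real (Metric.ball z ((1 - ‖z‖ ^ 2) / 4)) := by
        rw [measureReal_def, Complex.volume_ball, ENNReal.toReal_mul, ENNReal.toReal_pow,
          ENNReal.toReal_ofReal (by positivity), ENNReal.coe_toReal, NNReal.coe_real_pi]
        ring
    _ ≤ volume.real (pseudoHyperbolicDisk z (1 / 2)) :=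
        measureReal_mono (ball_subset_pseudoHyperbolicDisk hz)
          (volume_pseudoHyperbolicDisk_ne_top z _)

end PseudoHyperbolicDisk

section Doubling

variable {K : ℝ → ℝ} {C : ℝ}

lemma pos_of_doubling (hpos : ∀ t > 0, 0 < K t)
    (hdouble : ∀ t ∈ Set.Ioc (0 : ℝ) (1 / 2), K (2 * t) ≤ C * K t) : 0 < C := by
  have h := hdouble (1 / 4) ⟨by norm_num, by norm_num⟩
  have h1 : 0 < K (2 * (1 / 4)) := hpos _ (by norm_num)
  have h2 : 0 < K (1 / 4) := hpos _ (by norm_num)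
  nlinarith

lemma le_pow_mul_div_two_pow_of_doubling (hC : 0 ≤ C)
    (hdouble : ∀ t ∈ Set.Ioc (0 : ℝ) (1 / 2), K (2 * t) ≤ C * K t) {t : ℝ}
    (ht : t ∈ Set.Ioc 0 1) (n : ℕ) : K t ≤ C ^ n * K (t / 2 ^ n) := by
  induction n with
  | zero => simp
  | succ n ih =>
    have hmem : t / 2 ^ (n + 1) ∈ Set.Ioc (0 : ℝ) (1 / 2) := by
      refine ⟨div_pos ht.1 (by positivity), ?_⟩
      rw [div_le_iff₀ (by positivity), pow_succ]
      nlinarith [one_le_pow₀ (by norm_num : (1 : ℝ) ≤ 2) (n := n), ht.2]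
    have hstep := hdouble _ hmem
    rw [show 2 * (t / 2 ^ (n + 1)) = t / 2 ^ n by ring] at hstep
    calc K t ≤ C ^ n * K (t / 2 ^ n) := ih
      _ ≤ C ^ n * (C * K (t / 2 ^ (n + 1))) := by gcongr
      _ = C ^ (n + 1) * K (t / 2 ^ (n + 1)) := by ring

end Doubling

section Rpow

variable {x y α β : ℝ}

lemma Real.rpow_le_max_rpow_mul_rpow (s : ℝ) (hy : 0 < y) (hα : 0 < α) (h₁ : α * y ≤ x)
    (h₂ : x ≤ β * y) : x ^ s ≤ max (α ^ s) (β ^ s) * y ^ s := by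
  have hx : 0 < x := lt_of_lt_of_le (by positivity) h₁
  have hβ : 0 < β := pos_of_mul_pos_left (hx.trans_le h₂) hy.le
  rcases le_total 0 s with hs | hs
  · calc x ^ s ≤ (β * y) ^ s := Real.rpow_le_rpow hx.le h₂ hs
      _ = β ^ s * y ^ s := Real.mul_rpow hβ.le hy.le
      _ ≤ max (α ^ s) (β ^ s) * y ^ s := by gcongr; exact le_max_right _ _
  · calc x ^ s ≤ (α * y) ^ s := Real.rpow_le_rpow_of_nonpos (by positivity) h₁ hs
      _ = α ^ s * y ^ s := Real.mul_rpow hα.le hy.le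
      _ ≤ max (α ^ s) (β ^ s) * y ^ s := by gcongr; exact le_max_left _ _

lemma Real.min_rpow_mul_rpow_le_rpow (s : ℝ) (hy : 0 < y) (hα : 0 < α) (h₁ : α * y ≤ x)
    (h₂ : x ≤ β * y) : min (α ^ s) (β ^ s) * y ^ s ≤ x ^ s := by
  have hx : 0 < x := lt_of_lt_of_le (by positivity) h₁
  have hβ : 0 < β := pos_of_mul_pos_left (hx.trans_le h₂) hy.le
  rcases le_total 0 s with hs | hs
  · calc min (α ^ s) (β ^ s) * y ^ s ≤ α ^ s * y ^ s := by gcongr; exact min_le_left _ _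
      _ = (α * y) ^ s := (Real.mul_rpow hα.le hy.le).symm
      _ ≤ x ^ s := Real.rpow_le_rpow (by positivity) h₁ hs
  · calc min (α ^ s) (β ^ s) * y ^ s ≤ β ^ s * y ^ s := by gcongr; exact min_le_right _ _
      _ = (β * y) ^ s := (Real.mul_rpow hβ.le hy.le).symm
      _ ≤ x ^ s := Real.rpow_le_rpow_of_nonpos hx h₂ hs

end Rpow

section Integrand

variable {K : ℝ → ℝ} {C : ℝ} {a w z : ℂ}

lemma rpow_mul_rpow_le_of_mem_pseudoHyperbolicDisk (s r : ℝ) (hz : ‖z‖ < 1)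
    (hw : w ∈ pseudoHyperbolicDisk z (1 / 2)) :
    (1 - ‖w‖ ^ 2) ^ s * ‖1 - conj w * z‖ ^ r ≤
      max ((3 / 16 : ℝ) ^ s) (4 ^ s) * max ((1 / 2 : ℝ) ^ r) (2 ^ r) * (1 - ‖z‖ ^ 2) ^ (s + r) := by
  have hY : 0 < 1 - ‖z‖ ^ 2 := by nlinarith [norm_nonneg z]
  obtain ⟨hW₁, hW₂⟩ := one_sub_norm_sq_mem_Icc_of_mem_pseudoHyperbolicDisk hz hw
  obtain ⟨hD₁, hD₂⟩ := norm_one_sub_conj_mul_mem_Icc_of_mem_pseudoHyperbolicDisk hz hw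
  rw [div_eq_inv_mul] at hD₁
  rw [Real.rpow_add hY, mul_mul_mul_comm]
  exact mul_le_mul (Real.rpow_le_max_rpow_mul_rpow s hY (by norm_num) hW₁ hW₂)
    (Real.rpow_le_max_rpow_mul_rpow r hY (by norm_num) (by simpa using hD₁) hD₂)
    (by positivity) (by positivity)

lemma le_rpow_mul_rpow_of_mem_pseudoHyperbolicDisk (s r : ℝ) (hz : ‖z‖ < 1)
    (hw : w ∈ pseudoHyperbolicDisk z (1 / 2)) :
    min ((3 / 16 : ℝ) ^ s) (4 ^ s) * min ((1 / 2 : ℝ) ^ r) (2 ^ r) * (1 - ‖z‖ ^ 2) ^ (s + r) ≤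
      (1 - ‖w‖ ^ 2) ^ s * ‖1 - conj w * z‖ ^ r := by
  have hY : 0 < 1 - ‖z‖ ^ 2 := by nlinarith [norm_nonneg z]
  obtain ⟨hW₁, hW₂⟩ := one_sub_norm_sq_mem_Icc_of_mem_pseudoHyperbolicDisk hz hw
  obtain ⟨hD₁, hD₂⟩ := norm_one_sub_conj_mul_mem_Icc_of_mem_pseudoHyperbolicDisk hz hw
  have hW : 0 < 1 - ‖w‖ ^ 2 := by linarith
  rw [div_eq_inv_mul] at hD₁
  rw [Real.rpow_add hY, mul_mul_mul_comm]
  exact mul_le_mul (Real.min_rpow_mul_rpow_le_rpow s hY (by norm_num) hW₁ hW₂)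
    (Real.min_rpow_mul_rpow_le_rpow r hY (by norm_num) (by simpa using hD₁) hD₂)
    (by positivity) (by positivity)

lemma le_pow_mul_of_mem_pseudoHyperbolicDisk (hmono : Monotone K) (hC : 0 ≤ C)
    (hdouble : ∀ t ∈ Set.Ioc (0 : ℝ) (1 / 2), K (2 * t) ≤ C * K t) (ha : ‖a‖ < 1)
    (hz : ‖z‖ < 1) (hw : w ∈ pseudoHyperbolicDisk z (1 / 2)) :
    K (1 - ‖mobius a z‖ ^ 2) ≤ C ^ 6 * K (1 - ‖mobius a w‖ ^ 2) := by
  have hT := one_sub_norm_sq_mobius_pos ha hz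
  have hT₁ : 1 - ‖mobius a z‖ ^ 2 ≤ 1 := by nlinarith [norm_nonneg (mobius a z)]
  have hpow := le_pow_mul_div_two_pow_of_doubling hC hdouble ⟨hT, hT₁⟩ 6
  refine hpow.trans (mul_le_mul_of_nonneg_left (hmono ?_) (by positivity))
  have := one_sub_norm_sq_mobius_le_of_mem_pseudoHyperbolicDisk ha hz hw
  linarith

lemma integrableOn_pseudoHyperbolicDisk (hmono : Monotone K) (hnonneg : ∀ t > 0, 0 ≤ K t)
    (s r : ℝ) (ha : ‖a‖ < 1) (hz : ‖z‖ < 1) :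
    IntegrableOn (fun w => K (1 - ‖mobius a w‖ ^ 2) / ((1 - ‖w‖ ^ 2) ^ s * ‖1 - conj w * z‖ ^ r))
      (pseudoHyperbolicDisk z (1 / 2)) := by
  have hY : 0 < 1 - ‖z‖ ^ 2 := by nlinarith [norm_nonneg z]
  have hmeas : Measurable fun w =>
      K (1 - ‖mobius a w‖ ^ 2) / ((1 - ‖w‖ ^ 2) ^ s * ‖1 - conj w * z‖ ^ r) := by
    unfold mobius
    exact (hmono.measurable.comp (by fun_prop)).div (by fun_prop)
  refine Measure.integrableOn_of_bounded (M := K 1 / (min ((3 / 16 : ℝ) ^ s) (4 ^ s) *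
      min ((1 / 2 : ℝ) ^ r) (2 ^ r) * (1 - ‖z‖ ^ 2) ^ (s + r)))
    (volume_pseudoHyperbolicDisk_ne_top z _) hmeas.aestronglyMeasurable ?_
  rw [ae_restrict_iff' (measurableSet_pseudoHyperbolicDisk z _)]
  refine ae_of_all _ fun w hw => ?_
  have hK := hnonneg _ (one_sub_norm_sq_mobius_pos ha hw.1)
  have hW : 0 < 1 - ‖w‖ ^ 2 := by nlinarith [norm_nonneg w, hw.1]
  have hD : 0 < ‖1 - conj w * z‖ := by
    rw [← norm_one_sub_conj_mul_comm]
    exact norm_pos_iff.2 (one_sub_conj_mul_ne_zero hz.le hw.1)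
  rw [Real.norm_of_nonneg (by positivity)]
  exact div_le_div₀ (hnonneg 1 one_pos) (hmono (by nlinarith [norm_nonneg (mobius a w)]))
    (by positivity) (le_rpow_mul_rpow_of_mem_pseudoHyperbolicDisk s r hz hw)

lemma div_le_integrand_of_mem_pseudoHyperbolicDisk (hmono : Monotone K)
    (hnonneg : ∀ t > 0, 0 ≤ K t) (hC : 0 < C)
    (hdouble : ∀ t ∈ Set.Ioc (0 : ℝ) (1 / 2), K (2 * t) ≤ C * K t) (s r : ℝ) (ha : ‖a‖ < 1)
    (hz : ‖z‖ < 1) (hw : w ∈ pseudoHyperbolicDisk z (1 / 2)) :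
    K (1 - ‖mobius a z‖ ^ 2) / (C ^ 6 * (max ((3 / 16 : ℝ) ^ s) (4 ^ s) *
        max ((1 / 2 : ℝ) ^ r) (2 ^ r) * (1 - ‖z‖ ^ 2) ^ (s + r))) ≤
      K (1 - ‖mobius a w‖ ^ 2) / ((1 - ‖w‖ ^ 2) ^ s * ‖1 - conj w * z‖ ^ r) := by
  have hY : 0 < 1 - ‖z‖ ^ 2 := by nlinarith [norm_nonneg z]
  have hW : 0 < 1 - ‖w‖ ^ 2 := by nlinarith [norm_nonneg w, hw.1]
  have hD : 0 < ‖1 - conj w * z‖ := by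
    rw [← norm_one_sub_conj_mul_comm]
    exact norm_pos_iff.2 (one_sub_conj_mul_ne_zero hz.le hw.1)
  rw [← div_div]
  calc _ ≤ K (1 - ‖mobius a w‖ ^ 2) / (max ((3 / 16 : ℝ) ^ s) (4 ^ s) *
        max ((1 / 2 : ℝ) ^ r) (2 ^ r) * (1 - ‖z‖ ^ 2) ^ (s + r)) :=
        div_le_div_of_nonneg_right ((div_le_iff₀' (by positivity)).2
          (le_pow_mul_of_mem_pseudoHyperbolicDisk hmono hC.le hdouble ha hz hw)) (by positivity)
    _ ≤ _ := div_le_div_of_nonneg_left (hnonneg _ (one_sub_norm_sq_mobius_pos ha hw.1))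
        (by positivity) (rpow_mul_rpow_le_of_mem_pseudoHyperbolicDisk s r hz hw)

end Integrand

/-- Lower bound half of Lemma 2.2: if `K` is increasing, positive on `(0,∞)`, and doubling,
then the integral of `K(1−|σ_a(w)|²)/((1−|w|²)^s |1−w̄z|^r)` over the pseudo-hyperbolic
disk `E(z,1/2)` is bounded below by a constant times `K(1−|σ_a(z)|²)/(1−|z|²)^{s+r−2}`,
uniformly in `a, z` in the unit disk. -/
theorem stmt_15 (K : ℝ → ℝ) (hmono : Monotone K) (hpos : ∀ t > 0, 0 < K t)
    (C : ℝ) (hdouble : ∀ t ∈ Set.Ioc (0 : ℝ) (1 / 2), K (2 * t) ≤ C * K t) (s r : ℝ) :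
    ∃ c > (0 : ℝ), ∀ a z : ℂ, ‖a‖ < 1 → ‖z‖ < 1 →
      c * K (1 - ‖(a - z) / (1 - (starRingEnd ℂ) a * z)‖ ^ 2) / (1 - ‖z‖ ^ 2) ^ (s + r - 2) ≤
        ∫ w in {w : ℂ | ‖w‖ < 1 ∧ ‖(z - w) / (1 - (starRingEnd ℂ) z * w)‖ < 1 / 2},
          K (1 - ‖(a - w) / (1 - (starRingEnd ℂ) a * w)‖ ^ 2) /
            ((1 - ‖w‖ ^ 2) ^ s * ‖1 - (starRingEnd ℂ) w * z‖ ^ r) := by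
  have hC := pos_of_doubling hpos hdouble
  have hnonneg : ∀ t > 0, 0 ≤ K t := fun t ht => (hpos t ht).le
  set M := max ((3 / 16 : ℝ) ^ s) (4 ^ s) * max ((1 / 2 : ℝ) ^ r) (2 ^ r)
  have hM : 0 < M := by positivity
  refine ⟨Real.pi / (16 * C ^ 6 * M), by positivity, fun a z ha hz => ?_⟩
  have hY : 0 < 1 - ‖z‖ ^ 2 := by nlinarith [norm_nonneg z]
  have hK := hpos _ (one_sub_norm_sq_mobius_pos ha hz)
  set m := K (1 - ‖mobius a z‖ ^ 2) / (C ^ 6 * (M * (1 - ‖z‖ ^ 2) ^ (s + r)))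
  calc _ = m * (Real.pi / 16 * (1 - ‖z‖ ^ 2) ^ 2) := by
        rw [Real.rpow_sub hY, Real.rpow_two]
        simp only [m, mobius]
        field_simp
    _ ≤ volume.real (pseudoHyperbolicDisk z (1 / 2)) • m := by
        rw [smul_eq_mul, mul_comm]
        gcongr
        exact le_volume_real_pseudoHyperbolicDisk hz
    _ ≤ _ := setIntegral_ge_of_const_le (measurableSet_pseudoHyperbolicDisk z _)
        (volume_pseudoHyperbolicDisk_ne_top z _)
        (fun w hw => div_le_integrand_of_mem_pseudoHyperbolicDisk hmono hnonneg hC hdouble s r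
          ha hz hw)
        (integrableOn_pseudoHyperbolicDisk hmono hnonneg s r ha hz)
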